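/- arXiv:2012.09848 — 4 statements merged into one kernel-verified Lean document; each statement's English description precedes it below -/
import Mathlib

section
/- (Julia's Lemma) Let (X,d) be a proper geodesic metric space which is δ-hyperbolic for some δ ≥ 0 and has approaching geodesics, i.e. any two asymptotic geodesic rays are strongly asymptotic. Let f : X → X be non-expanding, p ∈ X, γ a geodesic ray, λ > 0, and let (w_n) be a sequence in X converging to the boundary point of γ (i.e. (w_n|γ(m))_p → ∞ as n,m → ∞) such that d(w_n,p) − d(f(w_n),p) → log λ. Then there exists a geodesic ray σ such that B_σ(f(z), p) ≤ B_γ(z,p) + log λ for every z ∈ X; in particular, for every R > 0, f maps the horoball { z : B_γ(z,p) < log R } into the horoball { z : B_σ(z,p) < log(λR) }. -/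
open Filter Metric Topology

/-- A geodesic ray: `d(γ s, γ t) = |s - t|` for all `s, t ≥ 0`. -/
def IsGeodesicRay {X : Type*} [MetricSpace X] (γ : ℝ → X) : Prop :=
  ∀ s t : ℝ, 0 ≤ s → 0 ≤ t → dist (γ s) (γ t) = |s - t|

/-- A geodesic metric space: any two points are joined by a geodesic segment. -/
def IsGeodesicSpace (X : Type*) [MetricSpace X] : Prop :=
  ∀ x y : X, ∃ γ : ℝ → X, γ 0 = x ∧ γ (dist x y) = y ∧
    ∀ s ∈ Set.Icc (0 : ℝ) (dist x y), ∀ t ∈ Set.Icc (0 : ℝ) (dist x y),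
      dist (γ s) (γ t) = |s - t|

/-- The Gromov product `(x|y)_p = (d(x,p) + d(y,p) - d(x,y))/2`. -/
noncomputable def gromovProduct {X : Type*} [MetricSpace X] (p x y : X) : ℝ :=
  (dist x p + dist y p - dist x y) / 2

/-- `δ`-hyperbolicity: `(x|y)_p ≥ min((x|z)_p, (z|y)_p) - δ` for all `x, y, z, p`. -/
def IsDeltaHyperbolic (X : Type*) [MetricSpace X] (δ : ℝ) : Prop :=
  ∀ p x y z : X, min (gromovProduct p x z) (gromovProduct p z y) - δ ≤ gromovProduct p x y

/-- Two geodesic rays are strongly asymptotic if `d(γ(t+T), σ(t+S)) → 0` for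
some `T, S ≥ 0`. -/
def StronglyAsymptotic {X : Type*} [MetricSpace X] (γ σ : ℝ → X) : Prop :=
  ∃ T S : ℝ, 0 ≤ T ∧ 0 ≤ S ∧
    Tendsto (fun t => dist (γ (t + T)) (σ (t + S))) atTop (nhds 0)

/-- Two geodesic rays are asymptotic if `sup_{t ≥ 0} d(γ t, σ t) < ∞`. -/
def AsymptoticRays {X : Type*} [MetricSpace X] (γ σ : ℝ → X) : Prop :=
  ∃ M : ℝ, ∀ t : ℝ, 0 ≤ t → dist (γ t) (σ t) ≤ M

/-- A space has approaching geodesics if asymptotic geodesic rays are strongly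
asymptotic. -/
def ApproachingGeodesics (X : Type*) [MetricSpace X] : Prop :=
  ∀ γ σ : ℝ → X, IsGeodesicRay γ → IsGeodesicRay σ →
    AsymptoticRays γ σ → StronglyAsymptotic γ σ

/-- The geodesic region of radius `R` around the ray `γ`. -/
def geodesicRegion {X : Type*} [MetricSpace X] (γ : ℝ → X) (R : ℝ) : Set X :=
  {x | ∃ t : ℝ, 0 ≤ t ∧ dist x (γ t) < R}

/-!
Pass to a nonprincipal ultrafilter `U` on `ℕ`. Properness makes the geodesic segments `[p, w n]`
and `[p, f (w n)]` converge along `U` to geodesic rays `γ'` and `σ`, and makes the horofunctions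
`h_w z = U-lim (d(z, w n) - d(w n, p))` and `h_{f∘w}` exist. Non-expansion gives
`h_{f∘w} (f z) ≤ h_w z + log λ`. Along a ray obtained as a limit of segments the horofunction is
dominated by the Busemann function, so `h_w ≤ B_γ' = B_γ`: hyperbolicity and `w n → γ(∞)` make
`γ'` asymptotic, hence strongly asymptotic, to `γ`. Symmetrically `B_σ ≤ h_{f∘w}`, comparing `σ`
with the limit ray of the segments `[z, f (w n)]`, which is asymptotic to `σ` by hyperbolicity.
-/

section

variable {X : Type*} [MetricSpace X]

def IsGeodesicSegment (g : ℝ → X) (x y : X) : Prop :=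
  g 0 = x ∧ g (dist x y) = y ∧
    ∀ s ∈ Set.Icc (0 : ℝ) (dist x y), ∀ t ∈ Set.Icc (0 : ℝ) (dist x y),
      dist (g s) (g t) = |s - t|

noncomputable def horofunction {ι : Type*} (l : Filter ι) (v : ι → X) (p z : X) : ℝ :=
  limUnder l fun i => dist z (v i) - dist (v i) p

/-- `busemann γ p z` is `B_γ(z, p)`. -/
noncomputable abbrev busemann (γ : ℝ → X) (p : X) : X → ℝ :=
  horofunction atTop γ p

lemma gromovProduct_comm (p x y : X) : gromovProduct p x y = gromovProduct p y x := by
  unfold gromovProduct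
  rw [dist_comm x y, add_comm (dist x p)]

lemma gromovProduct_le_dist_left (p x y : X) : gromovProduct p x y ≤ dist x p := by
  unfold gromovProduct
  linarith [dist_triangle_left y p x]

lemma tendsto_dist_atTop_of_gromovProduct {ι : Type*} {l : Filter ι} {p : X} {v : ι → X}
    {γ : ℝ → X} (hvγ : ∀ C, ∀ᶠ i in l, ∀ᶠ m in atTop, C ≤ gromovProduct p (v i) (γ m)) :
    Tendsto (fun i => dist p (v i)) l atTop :=
  tendsto_atTop.2 fun C => (hvγ C).mono fun _ hi => hi.exists.choose_spec.trans
    ((gromovProduct_le_dist_left p _ _).trans_eq (dist_comm _ _))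

lemma IsDeltaHyperbolic.nonneg {δ : ℝ} (h : IsDeltaHyperbolic X δ) (x : X) : 0 ≤ δ := by
  simpa using h x x x x

namespace IsGeodesicSegment

variable {g : ℝ → X} {x y : X} {t : ℝ}

lemma dist_left (hg : IsGeodesicSegment g x y) (ht : 0 ≤ t) (hty : t ≤ dist x y) :
    dist (g t) x = t := by
  have := hg.2.2 t ⟨ht, hty⟩ 0 ⟨le_rfl, dist_nonneg⟩
  rwa [hg.1, sub_zero, abs_of_nonneg ht] at this

lemma dist_right (hg : IsGeodesicSegment g x y) (ht : 0 ≤ t) (hty : t ≤ dist x y) :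
    dist (g t) y = dist x y - t := by
  have := hg.2.2 t ⟨ht, hty⟩ (dist x y) ⟨dist_nonneg, le_rfl⟩
  rwa [hg.2.1, abs_sub_comm, abs_of_nonneg (sub_nonneg.2 hty)] at this

lemma gromovProduct_eq (hg : IsGeodesicSegment g x y) (ht : 0 ≤ t) (hty : t ≤ dist x y) :
    gromovProduct x y (g t) = t := by
  unfold gromovProduct
  rw [hg.dist_left ht hty, dist_comm y (g t), hg.dist_right ht hty, dist_comm y x]
  ring

end IsGeodesicSegment

lemma tendsto_dist_left_atTop {ι : Type*} {l : Filter ι} {p : X} {v : ι → X}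
    (hv : Tendsto (fun i => dist p (v i)) l atTop) (q : X) :
    Tendsto (fun i => dist q (v i)) l atTop :=
  tendsto_atTop_mono (fun i => by linarith [dist_triangle p q (v i)])
    (tendsto_atTop_add_const_right l (-dist p q) hv)

lemma Ultrafilter.exists_tendsto_of_eventually_dist_le [ProperSpace X] {ι : Type*}
    (U : Ultrafilter ι) {c : ι → X} {p : X} {R : ℝ} (h : ∀ᶠ i in U, dist (c i) p ≤ R) :
    ∃ y, Tendsto c U (𝓝 y) := by
  obtain ⟨y, -, hy⟩ := (isCompact_closedBall p R).ultrafilter_le_nhds (U.map c)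
    (by rw [Ultrafilter.coe_map, le_principal_iff, Filter.mem_map]; exact h)
  exact ⟨y, hy⟩

lemma exists_isGeodesicRay_tendsto [ProperSpace X] {ι : Type*} (U : Ultrafilter ι)
    {q : X} {v : ι → X} {g : ι → ℝ → X} (hg : ∀ i, IsGeodesicSegment (g i) q (v i))
    (hv : Tendsto (fun i => dist q (v i)) U atTop) :
    ∃ σ : ℝ → X, IsGeodesicRay σ ∧ ∀ t, 0 ≤ t → Tendsto (fun i => g i t) U (𝓝 (σ t)) := by
  have hlim : ∀ t : ℝ, ∃ y, 0 ≤ t → Tendsto (fun i => g i t) U (𝓝 y) := by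
    intro t
    by_cases ht : 0 ≤ t
    · obtain ⟨y, hy⟩ := U.exists_tendsto_of_eventually_dist_le (p := q) (R := t)
        ((hv.eventually_ge_atTop t).mono fun i hi => ((hg i).dist_left ht hi).le)
      exact ⟨y, fun _ => hy⟩
    · exact ⟨q, fun h => absurd h ht⟩
  choose σ hσ using hlim
  refine ⟨σ, fun s t hs ht => ?_, hσ⟩
  refine tendsto_nhds_unique ((hσ s hs).dist (hσ t ht)) (tendsto_const_nhds.congr' ?_)
  filter_upwards [hv.eventually_ge_atTop (max s t)] with i hi
  exact ((hg i).2.2 s ⟨hs, (le_max_left s t).trans hi⟩ t ⟨ht, (le_max_right s t).trans hi⟩).symm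

lemma tendsto_horofunction {ι : Type*} (U : Ultrafilter ι) (v : ι → X) (p z : X) :
    Tendsto (fun i => dist z (v i) - dist (v i) p) U (𝓝 (horofunction U v p z)) := by
  refine tendsto_nhds_limUnder (U.exists_tendsto_of_eventually_dist_le (p := 0) (R := dist z p)
    (Eventually.of_forall fun i => ?_))
  rw [Real.dist_eq, sub_zero, dist_comm (v i) p]
  exact abs_dist_sub_le z p (v i)

lemma horofunction_swap {ι : Type*} {l : Filter ι} [l.NeBot] {v : ι → X} {p z : X} {b : ℝ}
    (h : Tendsto (fun i => dist z (v i) - dist (v i) p) l (𝓝 b)) :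
    horofunction l v z p = -b := by
  have hneg : Tendsto (fun i => dist p (v i) - dist (v i) z) l (𝓝 (-b)) :=
    h.neg.congr fun i => by rw [dist_comm z, dist_comm p]; ring
  exact tendsto_nhds_unique (tendsto_nhds_limUnder ⟨_, hneg⟩) hneg

namespace IsGeodesicRay

variable {γ : ℝ → X}

lemma dist_eq_sub (hγ : IsGeodesicRay γ) {s t : ℝ} (hs : 0 ≤ s) (hst : s ≤ t) :
    dist (γ s) (γ t) = t - s := by
  rw [hγ s t hs (hs.trans hst), abs_sub_comm, abs_of_nonneg (sub_nonneg.2 hst)]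

lemma exists_tendsto_dist_sub (hγ : IsGeodesicRay γ) (x : X) :
    ∃ b, Tendsto (fun t => dist x (γ t) - t) atTop (𝓝 b) := by
  set φ : ℝ → ℝ := fun t => dist x (γ (max t 0)) - max t 0
  have hanti : Antitone φ := by
    intro s t hst
    have hd := hγ.dist_eq_sub (le_max_right s 0) (max_le_max_right 0 hst)
    simp only [φ]
    linarith [dist_triangle x (γ (max s 0)) (γ (max t 0))]
  have hbdd : BddBelow (Set.range φ) := by
    refine ⟨-dist x (γ 0), ?_⟩
    rintro _ ⟨t, rfl⟩
    have hd := hγ.dist_eq_sub le_rfl (le_max_right t 0)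
    simp only [φ]
    linarith [dist_triangle (γ 0) x (γ (max t 0)), dist_comm (γ 0) x]
  refine ⟨_, (tendsto_atTop_ciInf hanti hbdd).congr' ?_⟩
  filter_upwards [eventually_ge_atTop 0] with t ht
  simp only [φ, max_eq_left ht]

lemma tendsto_busemann (hγ : IsGeodesicRay γ) (p z : X) :
    Tendsto (fun t => dist z (γ t) - dist (γ t) p) atTop (𝓝 (busemann γ p z)) := by
  obtain ⟨bz, hz⟩ := hγ.exists_tendsto_dist_sub z
  obtain ⟨bp, hp⟩ := hγ.exists_tendsto_dist_sub p
  refine tendsto_nhds_limUnder ⟨bz - bp, (hz.sub hp).congr fun t => ?_⟩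
  rw [dist_comm p]
  ring

end IsGeodesicRay

lemma StronglyAsymptotic.busemann_eq {γ σ : ℝ → X} (h : StronglyAsymptotic γ σ)
    (hγ : IsGeodesicRay γ) (hσ : IsGeodesicRay σ) (p z : X) :
    busemann γ p z = busemann σ p z := by
  obtain ⟨T, S, -, -, hTS⟩ := h
  have hγT := (hγ.tendsto_busemann p z).comp (tendsto_atTop_add_const_right atTop T tendsto_id)
  have hσS := (hσ.tendsto_busemann p z).comp (tendsto_atTop_add_const_right atTop S tendsto_id)
  have hdiff : Tendsto (fun t => (dist z (γ (t + T)) - dist (γ (t + T)) p) -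
      (dist z (σ (t + S)) - dist (σ (t + S)) p)) atTop (𝓝 0) := by
    refine squeeze_zero_norm (fun t => ?_) (by simpa using hTS.const_mul 2)
    rw [Real.norm_eq_abs, abs_le]
    constructor <;> linarith [dist_triangle z (γ (t + T)) (σ (t + S)),
      dist_triangle z (σ (t + S)) (γ (t + T)), dist_triangle (γ (t + T)) (σ (t + S)) p,
      dist_triangle (σ (t + S)) (γ (t + T)) p, dist_comm (γ (t + T)) (σ (t + S))]
  exact sub_eq_zero.1 (tendsto_nhds_unique (hγT.sub hσS) hdiff)

lemma horofunction_le_busemann_of_tendsto_segments {ι : Type*} (U : Ultrafilter ι) {q : X}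
    {v : ι → X} {g : ι → ℝ → X} (hg : ∀ i, IsGeodesicSegment (g i) q (v i))
    (hv : Tendsto (fun i => dist q (v i)) U atTop) {σ : ℝ → X} (hσ : IsGeodesicRay σ)
    (hσg : ∀ t, 0 ≤ t → Tendsto (fun i => g i t) U (𝓝 (σ t))) (x : X) :
    horofunction U v q x ≤ busemann σ q x := by
  refine ge_of_tendsto (hσ.tendsto_busemann q x)
    ((eventually_ge_atTop 0).mono fun t ht => ?_)
  refine le_of_tendsto_of_tendsto (tendsto_horofunction U v q x)
    ((tendsto_const_nhds.dist (hσg t ht)).sub ((hσg t ht).dist tendsto_const_nhds)) ?_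
  filter_upwards [hv.eventually_ge_atTop t] with i hi
  have hdq := (hg i).dist_left ht hi
  have hdv := (hg i).dist_right ht hi
  linarith [dist_triangle x (g i t) (v i), dist_comm (v i) q]

namespace IsDeltaHyperbolic

variable {δ : ℝ}

lemma dist_segment_le (hX : IsDeltaHyperbolic X δ) {g : ℝ → X} {p w x : X} {t c : ℝ}
    (hg : IsGeodesicSegment g p w) (ht : 0 ≤ t) (htw : t ≤ dist p w)
    (hxw : c ≤ gromovProduct p x w) (hct : c ≤ t) :
    dist x (g t) ≤ dist x p + t - 2 * c + 2 * δ := by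
  have hmin : c ≤ min (gromovProduct p x w) (gromovProduct p w (g t)) :=
    le_min hxw (by rw [hg.gromovProduct_eq ht htw]; exact hct)
  have hxy : c - δ ≤ gromovProduct p x (g t) := by linarith [hX p x (g t) w]
  unfold gromovProduct at hxy
  linarith [hg.dist_left ht htw]

lemma dist_segments_le (hX : IsDeltaHyperbolic X δ) {g g' : ℝ → X} {p q w : X} {t : ℝ}
    (hg : IsGeodesicSegment g p w) (hg' : IsGeodesicSegment g' q w) (ht : 0 ≤ t)
    (htp : t ≤ dist p w) (htq : t ≤ dist q w) :
    dist (g' t) (g t) ≤ 3 * dist q p + 2 * δ := by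
  have hdq := hg'.dist_left ht htq
  have hdw := hg'.dist_right ht htq
  have hqp := dist_triangle (g' t) q p
  have hpq := dist_triangle (g' t) p q
  have hxw : t - dist q p ≤ gromovProduct p (g' t) w := by
    unfold gromovProduct
    linarith [dist_triangle q p w, dist_comm w p, dist_comm p q]
  linarith [hX.dist_segment_le hg ht htp hxw (by linarith [dist_nonneg (x := q) (y := p)]),
    dist_comm p q]

lemma dist_ray_segment_le (hX : IsDeltaHyperbolic X δ) {γ g : ℝ → X} {p w : X} {t m : ℝ}
    (hγ : IsGeodesicRay γ) (hg : IsGeodesicSegment g p w) (ht : 0 ≤ t) (htw : t ≤ dist p w)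
    (htm : t ≤ m) (hwm : dist (γ t) p ≤ gromovProduct p w (γ m)) :
    dist (γ t) (g t) ≤ 3 * dist (γ 0) p + 4 * δ := by
  have hγtm := hγ.dist_eq_sub ht htm
  have hγtp : dist (γ t) p ≤ t + dist (γ 0) p := by
    linarith [dist_triangle (γ t) (γ 0) p, dist_comm (γ 0) (γ t), hγ.dist_eq_sub le_rfl ht]
  have hγpt : t - dist (γ 0) p ≤ dist (γ t) p := by
    linarith [dist_triangle (γ 0) p (γ t), dist_comm p (γ t), hγ.dist_eq_sub le_rfl ht]
  have hγpm : m - dist (γ 0) p ≤ dist (γ m) p := by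
    linarith [dist_triangle (γ 0) p (γ m), dist_comm p (γ m), hγ.dist_eq_sub le_rfl (ht.trans htm)]
  have htm_p : dist (γ t) p - dist (γ 0) p ≤ gromovProduct p (γ t) (γ m) := by
    unfold gromovProduct
    linarith
  have hmw : dist (γ t) p - dist (γ 0) p ≤ gromovProduct p (γ m) w := by
    rw [gromovProduct_comm]
    linarith [dist_nonneg (x := γ 0) (y := p)]
  have hxw : dist (γ t) p - dist (γ 0) p - δ ≤ gromovProduct p (γ t) w := by
    linarith [hX p (γ t) w (γ m), le_min htm_p hmw]
  linarith [hX.dist_segment_le hg ht htw hxw (by linarith [hX.nonneg p])]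

lemma asymptoticRays_of_tendsto_segments (hX : IsDeltaHyperbolic X δ) {γ : ℝ → X}
    (hγ : IsGeodesicRay γ) {ι : Type*} {l : Filter ι} [l.NeBot] {p : X} {v : ι → X}
    {g : ι → ℝ → X} (hg : ∀ i, IsGeodesicSegment (g i) p (v i))
    (hvγ : ∀ C, ∀ᶠ i in l, ∀ᶠ m in atTop, C ≤ gromovProduct p (v i) (γ m))
    {σ : ℝ → X} (hσg : ∀ t, 0 ≤ t → Tendsto (fun i => g i t) l (𝓝 (σ t))) :
    AsymptoticRays γ σ := by
  refine ⟨3 * dist (γ 0) p + 4 * δ, fun t ht =>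
    le_of_tendsto (tendsto_const_nhds.dist (hσg t ht)) ?_⟩
  filter_upwards [(tendsto_dist_atTop_of_gromovProduct hvγ).eventually_ge_atTop t,
    hvγ (dist (γ t) p)] with i hit hiγ
  obtain ⟨m, hm, htm⟩ := (hiγ.and (eventually_ge_atTop t)).exists
  exact hX.dist_ray_segment_le hγ (hg i) ht hit htm hm

end IsDeltaHyperbolic

lemma horofunction_comp_le {ι : Type*} (U : Ultrafilter ι) {f : X → X}
    (hf : ∀ a b : X, dist (f a) (f b) ≤ dist a b) (v : ι → X) (p z : X) {L : ℝ}
    (hL : Tendsto (fun i => dist (v i) p - dist (f (v i)) p) U (𝓝 L)) :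
    horofunction U (f ∘ v) p (f z) ≤ horofunction U v p z + L := by
  refine le_of_tendsto_of_tendsto' (tendsto_horofunction U (f ∘ v) p (f z))
    ((tendsto_horofunction U v p z).add hL) fun i => ?_
  simp only [Function.comp_apply]
  linarith [hf z (v i)]

/-- Compare `σ` with the limit ray of the segments `[z, v i]`, which is asymptotic to it. -/
lemma busemann_le_horofunction_of_tendsto_segments [ProperSpace X]
    (hX : IsGeodesicSpace X) {δ : ℝ} (hhyp : IsDeltaHyperbolic X δ) (happ : ApproachingGeodesics X)
    {ι : Type*} (U : Ultrafilter ι) {p : X} {v : ι → X} {g : ι → ℝ → X}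
    (hg : ∀ i, IsGeodesicSegment (g i) p (v i)) (hv : Tendsto (fun i => dist p (v i)) U atTop)
    {σ : ℝ → X} (hσ : IsGeodesicRay σ) (hσg : ∀ t, 0 ≤ t → Tendsto (fun i => g i t) U (𝓝 (σ t)))
    (z : X) :
    busemann σ p z ≤ horofunction U v p z := by
  choose seg hseg using hX
  have hvz := tendsto_dist_left_atTop hv z
  obtain ⟨β, hβ, hβg⟩ := exists_isGeodesicRay_tendsto U (fun i => hseg z (v i)) hvz
  have hβσ : AsymptoticRays β σ := by
    refine ⟨3 * dist z p + 2 * δ, fun t ht => le_of_tendsto ((hβg t ht).dist (hσg t ht)) ?_⟩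
    filter_upwards [hv.eventually_ge_atTop t, hvz.eventually_ge_atTop t] with i hp hz
    exact hhyp.dist_segments_le (hg i) (hseg z (v i)) ht hp hz
  calc busemann σ p z
      = busemann β p z := ((happ β σ hβ hσ hβσ).busemann_eq hβ hσ p z).symm
    _ = -busemann β z p := horofunction_swap (hβ.tendsto_busemann z p)
    _ ≤ -horofunction U v z p :=
      neg_le_neg <|
        horofunction_le_busemann_of_tendsto_segments U (fun i => hseg z (v i)) hvz hβ hβg p
    _ = horofunction U v p z := by
      rw [horofunction_swap (tendsto_horofunction U v p z), neg_neg]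

lemma image_setOf_lt_log_subset {α β : Type*} {f : α → β} {B : α → ℝ} {B' : β → ℝ} {lam : ℝ}
    (hlam : 0 < lam) (hB : ∀ z, B' (f z) ≤ B z + Real.log lam) {R : ℝ} (hR : 0 < R) :
    f '' {z | B z < Real.log R} ⊆ {z | B' z < Real.log (lam * R)} := by
  rintro _ ⟨z, hz, rfl⟩
  have hz : B z < Real.log R := hz
  show B' (f z) < Real.log (lam * R)
  rw [Real.log_mul hlam.ne' hR.ne']
  linarith [hB z]

end

theorem julia_lemma_general {X : Type*} [MetricSpace X] [ProperSpace X]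
    (hX : IsGeodesicSpace X)
    (δ : ℝ) (hhyp : IsDeltaHyperbolic X δ)
    (happ : ApproachingGeodesics X)
    (f : X → X) (hf : ∀ a b : X, dist (f a) (f b) ≤ dist a b)
    (p : X) (γ : ℝ → X) (hγ : IsGeodesicRay γ)
    (lam : ℝ) (hlam : 0 < lam)
    (w : ℕ → X)
    (hw : ∀ C > (0 : ℝ), ∃ N : ℕ, ∀ n ≥ N, ∀ m : ℝ, (N : ℝ) ≤ m →
      C ≤ gromovProduct p (w n) (γ m))
    (hdil : Tendsto (fun n => dist (w n) p - dist (f (w n)) p) atTop (nhds (Real.log lam)))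
    (Bγ : X → ℝ)
    (hBγ : ∀ z : X, Tendsto (fun t => dist z (γ t) - dist (γ t) p) atTop (nhds (Bγ z))) :
    ∃ (σ : ℝ → X) (Bσ : X → ℝ), IsGeodesicRay σ ∧
      (∀ z : X, Tendsto (fun t => dist z (σ t) - dist (σ t) p) atTop (nhds (Bσ z))) ∧
      (∀ z : X, Bσ (f z) ≤ Bγ z + Real.log lam) ∧
      (∀ R > (0 : ℝ), f '' {z : X | Bγ z < Real.log R} ⊆
        {z : X | Bσ z < Real.log (lam * R)}) := by
  let U : Ultrafilter ℕ := hyperfilter ℕ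
  have hU : (U : Filter ℕ) ≤ atTop := Nat.cofinite_eq_atTop ▸ hyperfilter_le_cofinite
  have hwγ : ∀ C, ∀ᶠ n in (U : Filter ℕ), ∀ᶠ m in atTop, C ≤ gromovProduct p (w n) (γ m) := by
    intro C
    obtain ⟨N, hN⟩ := hw (max C 1) (by positivity)
    exact (eventually_ge_atTop N).filter_mono hU |>.mono fun n hn =>
      (eventually_ge_atTop (N : ℝ)).mono fun m hm => (le_max_left C 1).trans (hN n hn m hm)
  have hw_far := tendsto_dist_atTop_of_gromovProduct hwγ
  have hfw_far : Tendsto (fun n => dist p (f (w n))) U atTop :=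
    (hw_far.atTop_add (hdil.mono_left hU).neg).congr fun n => by
      rw [dist_comm (w n) p, dist_comm (f (w n)) p]; ring
  have hseg : ∀ x y : X, ∃ g, IsGeodesicSegment g x y := hX
  choose seg hseg using hseg
  obtain ⟨γ', hγ', hγ'g⟩ := exists_isGeodesicRay_tendsto U (fun n => hseg p (w n)) hw_far
  obtain ⟨σ, hσ, hσg⟩ := exists_isGeodesicRay_tendsto U (fun n => hseg p (f (w n))) hfw_far
  have hγγ' : StronglyAsymptotic γ γ' := happ γ γ' hγ hγ'
    (hhyp.asymptoticRays_of_tendsto_segments hγ (fun n => hseg p (w n)) hwγ hγ'g)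
  have hB : ∀ z, busemann σ p (f z) ≤ Bγ z + Real.log lam := fun z => calc
    busemann σ p (f z) ≤ horofunction U (f ∘ w) p (f z) :=
      busemann_le_horofunction_of_tendsto_segments hX hhyp happ U
        (fun n => hseg p (f (w n))) hfw_far hσ hσg (f z)
    _ ≤ horofunction U w p z + Real.log lam := horofunction_comp_le U hf w p z (hdil.mono_left hU)
    _ ≤ busemann γ' p z + Real.log lam := by
      grw [horofunction_le_busemann_of_tendsto_segments U (fun n => hseg p (w n)) hw_far hγ' hγ'g z]
    _ = Bγ z + Real.log lam := by
      rw [← hγγ'.busemann_eq hγ hγ',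
        tendsto_nhds_unique (hγ.tendsto_busemann p z) (hBγ z)]
  exact ⟨σ, busemann σ p, hσ, hσ.tendsto_busemann p, hB,
    fun R hR => image_setOf_lt_log_subset hlam hB hR⟩

/-- Julia's Lemma: in a proper geodesic δ-hyperbolic space with
approaching geodesics, if (w_n) converges to the boundary point of the geodesic
ray γ and d(w_n,p) - d(f(w_n),p) → log λ, then there is a geodesic ray σ with
B_σ(f z, p) ≤ B_γ(z, p) + log λ for all z; in particular f maps the horoball
{B_γ(·,p) < log R} into {B_σ(·,p) < log(λR)} for every R > 0. -/
theorem julia_lemma {X : Type*} [MetricSpace X] [ProperSpace X]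
    (hX : IsGeodesicSpace X)
    (δ : ℝ) (hδ : 0 ≤ δ) (hhyp : IsDeltaHyperbolic X δ)
    (happ : ApproachingGeodesics X)
    (f : X → X) (hf : ∀ a b : X, dist (f a) (f b) ≤ dist a b)
    (p : X) (γ : ℝ → X) (hγ : IsGeodesicRay γ)
    (lam : ℝ) (hlam : 0 < lam)
    (w : ℕ → X)
    (hw : ∀ C > (0 : ℝ), ∃ N : ℕ, ∀ n ≥ N, ∀ m : ℝ, (N : ℝ) ≤ m →
      C ≤ gromovProduct p (w n) (γ m))
    (hdil : Tendsto (fun n => dist (w n) p - dist (f (w n)) p) atTop (nhds (Real.log lam)))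
    (Bγ : X → ℝ)
    (hBγ : ∀ z : X, Tendsto (fun t => dist z (γ t) - dist (γ t) p) atTop (nhds (Bγ z))) :
    ∃ (σ : ℝ → X) (Bσ : X → ℝ), IsGeodesicRay σ ∧
      (∀ z : X, Tendsto (fun t => dist z (σ t) - dist (σ t) p) atTop (nhds (Bσ z))) ∧
      (∀ z : X, Bσ (f z) ≤ Bγ z + Real.log lam) ∧
      (∀ R > (0 : ℝ), f '' {z : X | Bγ z < Real.log R} ⊆
        {z : X | Bσ z < Real.log (lam * R)}) :=
  julia_lemma_general hX δ hhyp happ f hf p γ hγ lam hlam w hw hdil Bγ hBγ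
end

section
/- Let (X,d) be a proper geodesic metric space which is δ-hyperbolic for some δ ≥ 0, and let f : X → X be a bijective isometry with diverging forward orbits, i.e. d(x₀, f^n(x₀)) → ∞. Let γ : ℝ → X be a geodesic line with γ(0) = x₀ and suppose there is R > 0 such that for every n ≥ 0 there exists t ≥ 0 with d(f^n(x₀), γ(t)) ≤ R (the forward orbit lies in a geodesic region around γ|_{[0,∞)}). Then sup_{n≥0} ( f^n(x₀) | f^{−n}(x₀) )_{x₀} < ∞; hence f is a hyperbolic isometry. -/
open Filter Metric Topology

/-! Since `f` is an isometry, `(fⁿx₀ | f⁻ⁿx₀)_{x₀} = d(x₀, fⁿx₀) - d(x₀, f²ⁿx₀)/2` and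
`d(fⁿx₀, f²ⁿx₀) = d(x₀, fⁿx₀)`. Both `fⁿx₀` and `f²ⁿx₀` are `R`-close to the ray, so their
positions along it differ by about `d(x₀, fⁿx₀)`; once `f²ⁿx₀` is far from `x₀`, it must therefore
lie about twice as far out as `fⁿx₀`, which bounds the Gromov product by `2R`. -/

theorem Isometry.iterate {α : Type*} [PseudoEMetricSpace α] {f : α → α} (hf : Isometry f) :
    ∀ n : ℕ, Isometry f^[n]
  | 0 => isometry_id
  | n + 1 => (hf.iterate n).comp hf

namespace IsometryEquiv

variable {X : Type*} [MetricSpace X] (e : X ≃ᵢ X) (x : X) (n : ℕ)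

theorem iterate_apply_symm_iterate_apply : e^[n] (e.symm^[n] x) = x :=
  Function.LeftInverse.iterate e.apply_symm_apply n x

theorem dist_symm_iterate : dist x (e.symm^[n] x) = dist x (e^[n] x) := by
  rw [← (e.isometry.iterate n).dist_eq, iterate_apply_symm_iterate_apply, dist_comm]

theorem dist_iterate_symm_iterate : dist (e^[n] x) (e.symm^[n] x) = dist x (e^[2 * n] x) := by
  rw [← (e.isometry.iterate n).dist_eq, iterate_apply_symm_iterate_apply, dist_comm, two_mul,
    Function.iterate_add_apply]

theorem dist_iterate_iterate_two_mul : dist (e^[n] x) (e^[2 * n] x) = dist x (e^[n] x) := by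
  rw [two_mul, Function.iterate_add_apply, (e.isometry.iterate n).dist_eq]

theorem gromovProduct_iterate_symm_iterate :
    gromovProduct x (e^[n] x) (e.symm^[n] x) = dist x (e^[n] x) - dist x (e^[2 * n] x) / 2 := by
  rw [gromovProduct, dist_comm _ x, dist_comm _ x, dist_symm_iterate, dist_iterate_symm_iterate]
  ring

end IsometryEquiv

section GeodesicRay

variable {X : Type*} [MetricSpace X] {γ : ℝ → X} {y z : X} {R s t : ℝ}

theorem IsGeodesicRay.abs_dist_sub_le (hγ : IsGeodesicRay γ) (ht : 0 ≤ t)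
    (hy : dist y (γ t) ≤ R) : |dist (γ 0) y - t| ≤ R := by
  have h := _root_.abs_dist_sub_le y (γ t) (γ 0)
  rw [dist_comm y, hγ t 0 ht le_rfl, sub_zero, abs_of_nonneg ht] at h
  exact h.trans hy

theorem IsGeodesicRay.dist_le_or_two_mul_dist_le (hγ : IsGeodesicRay γ) (ht : 0 ≤ t)
    (hs : 0 ≤ s) (hy : dist y (γ t) ≤ R) (hz : dist z (γ s) ≤ R)
    (hyz : dist y z = dist (γ 0) y) :
    dist (γ 0) z ≤ 4 * R ∨ 2 * dist (γ 0) y ≤ dist (γ 0) z + 4 * R := by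
  have hty := abs_le.1 (hγ.abs_dist_sub_le ht hy)
  have hsz := abs_le.1 (hγ.abs_dist_sub_le hs hz)
  have hts : dist y z ≤ R + |t - s| + R := by
    calc dist y z ≤ dist y (γ t) + dist (γ t) (γ s) + dist (γ s) z := dist_triangle4 _ _ _ _
      _ ≤ R + |t - s| + R := by rw [hγ t s ht hs, dist_comm (γ s) z]; gcongr
  rcases abs_cases (t - s) with ⟨h, _⟩ | ⟨h, _⟩
  · left; linarith
  · right; linarith

end GeodesicRay

theorem isometry_hyperbolic_of_orbit_in_geodesicRegion_general {X : Type*} [MetricSpace X]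
    (e : X ≃ᵢ X) (x₀ : X)
    (hdiv : Tendsto (fun n : ℕ => dist x₀ ((⇑e)^[n] x₀)) atTop atTop)
    (γ : ℝ → X) (hγ : ∀ s t : ℝ, dist (γ s) (γ t) = |s - t|) (hγ0 : γ 0 = x₀)
    (R : ℝ)
    (horb : ∀ n : ℕ, ∃ t : ℝ, 0 ≤ t ∧ dist ((⇑e)^[n] x₀) (γ t) ≤ R) :
    ∃ M : ℝ, ∀ n : ℕ, gromovProduct x₀ ((⇑e)^[n] x₀) ((⇑e.symm)^[n] x₀) ≤ M := by
  have hray : IsGeodesicRay γ := fun s t _ _ => hγ s t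
  have hfar : ∀ᶠ n in atTop, 4 * R < dist x₀ (e^[2 * n] x₀) :=
    (tendsto_atTop_mono (fun n => Nat.le_mul_of_pos_left n two_pos) tendsto_id).eventually
      (hdiv.eventually_gt_atTop _)
  have hbound : ∀ᶠ n in atTop, gromovProduct x₀ (e^[n] x₀) (e.symm^[n] x₀) ≤ 2 * R := by
    filter_upwards [hfar] with n hn
    obtain ⟨t, ht, hnt⟩ := horb n
    obtain ⟨s, hs, hns⟩ := horb (2 * n)
    have hcases := hray.dist_le_or_two_mul_dist_le ht hs hnt hns
      (by rw [hγ0]; exact e.dist_iterate_iterate_two_mul x₀ n)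
    rw [hγ0] at hcases
    rw [e.gromovProduct_iterate_symm_iterate]
    rcases hcases with h | h <;> linarith
  obtain ⟨M, hM⟩ := (isBoundedUnder_of_eventually_le hbound).bddAbove_range
  exact ⟨M, fun n => hM ⟨n, rfl⟩⟩

/-- a bijective isometry with diverging forward orbit contained in
a geodesic region around a geodesic line through the base point is hyperbolic:
the Gromov products of forward and backward iterates stay bounded. -/
theorem isometry_hyperbolic_of_orbit_in_geodesicRegion {X : Type*} [MetricSpace X]
    [ProperSpace X] (hX : IsGeodesicSpace X)
    (δ : ℝ) (hδ : 0 ≤ δ) (hhyp : IsDeltaHyperbolic X δ)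
    (e : X ≃ᵢ X) (x₀ : X)
    (hdiv : Tendsto (fun n : ℕ => dist x₀ ((⇑e)^[n] x₀)) atTop atTop)
    (γ : ℝ → X) (hγ : ∀ s t : ℝ, dist (γ s) (γ t) = |s - t|) (hγ0 : γ 0 = x₀)
    (R : ℝ) (hR : 0 < R)
    (horb : ∀ n : ℕ, ∃ t : ℝ, 0 ≤ t ∧ dist ((⇑e)^[n] x₀) (γ t) ≤ R) :
    ∃ M : ℝ, ∀ n : ℕ, gromovProduct x₀ ((⇑e)^[n] x₀) ((⇑e.symm)^[n] x₀) ≤ M :=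
  isometry_hyperbolic_of_orbit_in_geodesicRegion_general e x₀ hdiv γ hγ hγ0 R horb
end

section
/- Let n ≥ 1 and let P : ℂⁿ → ℝ be a convex function with P ≥ 0 and P(0) = 0 such that for all z, w ∈ ℂⁿ the function t ↦ P(z + t·w), t ∈ ℝ, is a polynomial function of t, and such that P is non-degenerate, i.e. the zero set W := { z ∈ ℂⁿ : P(z) = 0 } contains no complex affine line. Then W is an ℝ-linear subspace of ℂⁿ which is totally real: for every z ∈ W with z ≠ 0 one has P(i·z) ≠ 0, i.e. W ∩ (i·W) = {0}. -/
/-!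
Convexity and non-negativity make the zero set `W` of `P` convex, and it contains `0`. Along the
line through `0` and a point of `W`, `P` is a polynomial vanishing on a whole segment, hence
everywhere; so `W` is closed under real scaling, and a convex set closed under real scaling is an
`ℝ`-subspace. If `z ≠ 0` and `i • z` both lay in `W`, this subspace would contain the complex line
`ℂ • z = ℝ • z + ℝ • (i • z)`, contradicting non-degeneracy.
-/

open Polynomial Set

section ZeroSet

variable {E : Type*} [AddCommGroup E] [Module ℝ E] {P : E → ℝ}

theorem ConvexOn.convex_setOf_eq_zero (hconv : ConvexOn ℝ univ P) (hpos : ∀ x, 0 ≤ P x) :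
    Convex ℝ {x | P x = 0} := by
  convert hconv.convex_le 0 using 1
  ext x
  simpa using (hpos x).ge_iff_eq'.symm

theorem ConvexOn.eq_zero_real_smul_of_eq_zero (hconv : ConvexOn ℝ univ P)
    (hpos : ∀ x, 0 ≤ P x) (h0 : P 0 = 0)
    {z : E} {q : ℝ[X]} (hq : ∀ t : ℝ, P (t • z) = q.eval t) (hz : P z = 0) (t : ℝ) :
    P (t • z) = 0 := by
  have hsegment : ∀ s ∈ Icc (0 : ℝ) 1, q.IsRoot s := fun s hs => by
    rw [IsRoot, ← hq]
    exact (hconv.convex_setOf_eq_zero hpos).smul_mem_of_zero_mem h0 hz hs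
  have hq0 : q = 0 := eq_zero_of_infinite_isRoot q ((Icc_infinite one_pos).mono hsegment)
  rw [hq, hq0, eval_zero]

end ZeroSet

theorem Convex.add_mem_of_two_smul_mem {E : Type*} [AddCommGroup E] [Module ℝ E] {S : Set E}
    (hS : Convex ℝ S) (hsmul : ∀ x ∈ S, (2 : ℝ) • x ∈ S) {x y : E} (hx : x ∈ S) (hy : y ∈ S) :
    x + y ∈ S := by
  have hmid := hsmul _
    (hS hx hy (a := 1 / 2) (b := 1 / 2) (by norm_num) (by norm_num) (by norm_num))
  rwa [← smul_add, smul_smul, show (2 : ℝ) * (1 / 2) = 1 by norm_num, one_smul] at hmid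

theorem Complex.smul_eq_re_smul_add_im_smul {E : Type*} [AddCommGroup E] [Module ℝ E]
    [Module ℂ E] [IsScalarTower ℝ ℂ E] (ζ : ℂ) (z : E) :
    ζ • z = ζ.re • z + ζ.im • (I • z) := by
  conv_lhs => rw [← Complex.re_add_im ζ]
  rw [add_smul, mul_smul, ← algebraMap_smul ℂ ζ.re z, ← algebraMap_smul ℂ ζ.im (I • z)]
  rfl

theorem zero_set_totally_real_general (n : ℕ) (P : (Fin n → ℂ) → ℝ)
    (hconv : ConvexOn ℝ Set.univ P)
    (hpos : ∀ z : Fin n → ℂ, 0 ≤ P z) (h0 : P 0 = 0)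
    (hpoly : ∀ z w : Fin n → ℂ, ∃ q : Polynomial ℝ, ∀ t : ℝ, P (z + t • w) = q.eval t)
    (hnondeg : ∀ a b : Fin n → ℂ, b ≠ 0 → ∃ ζ : ℂ, P (a + ζ • b) ≠ 0) :
    (∀ z w : Fin n → ℂ, P z = 0 → P w = 0 → P (z + w) = 0) ∧
    (∀ (z : Fin n → ℂ) (t : ℝ), P z = 0 → P (t • z) = 0) ∧
    (∀ z : Fin n → ℂ, P z = 0 → z ≠ 0 → P (Complex.I • z) ≠ 0) := by
  have hsmul : ∀ (z : Fin n → ℂ) (t : ℝ), P z = 0 → P (t • z) = 0 := fun z t hz => by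
    obtain ⟨q, hq⟩ := hpoly 0 z
    exact hconv.eq_zero_real_smul_of_eq_zero hpos h0 (by simpa using hq) hz t
  have hadd : ∀ z w : Fin n → ℂ, P z = 0 → P w = 0 → P (z + w) = 0 := fun z w hz hw =>
    (hconv.convex_setOf_eq_zero hpos).add_mem_of_two_smul_mem (fun x hx => hsmul x 2 hx) hz hw
  refine ⟨hadd, hsmul, fun z hz hz0 hIz => ?_⟩
  obtain ⟨ζ, hζ⟩ := hnondeg 0 z hz0
  rw [zero_add, Complex.smul_eq_re_smul_add_im_smul] at hζ
  exact hζ (hadd _ _ (hsmul z _ hz) (hsmul _ _ hIz))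

/-- the zero set of a non-negative, non-degenerate convex
real-polynomial function P on ℂⁿ with P(0) = 0 is a totally real ℝ-linear
subspace of ℂⁿ. -/
theorem zero_set_totally_real (n : ℕ) (hn : 1 ≤ n) (P : (Fin n → ℂ) → ℝ)
    (hconv : ConvexOn ℝ Set.univ P)
    (hpos : ∀ z : Fin n → ℂ, 0 ≤ P z) (h0 : P 0 = 0)
    (hpoly : ∀ z w : Fin n → ℂ, ∃ q : Polynomial ℝ, ∀ t : ℝ, P (z + t • w) = q.eval t)
    (hnondeg : ∀ a b : Fin n → ℂ, b ≠ 0 → ∃ ζ : ℂ, P (a + ζ • b) ≠ 0) :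
    (∀ z w : Fin n → ℂ, P z = 0 → P w = 0 → P (z + w) = 0) ∧
    (∀ (z : Fin n → ℂ) (t : ℝ), P z = 0 → P (t • z) = 0) ∧
    (∀ z : Fin n → ℂ, P z = 0 → z ≠ 0 → P (Complex.I • z) ≠ 0) :=
  zero_set_totally_real_general n P hconv hpos h0 hpoly hnondeg
end

section
/- Let (X,d) be a proper geodesic metric space which is δ-hyperbolic for some δ ≥ 0, let p ∈ X and R > 0. Let (w_n) be a sequence in X going to infinity in the Gromov sense (i.e. (w_n|w_m)_p → ∞ as n,m → ∞) such that the functions x ↦ d(x,w_n) − d(w_n,p) converge pointwise on X to a function h : X → ℝ. Let (x_n) be a sequence in X with h(x_n) < log R for all n and d(x_n,p) → ∞. Then (x_n | w_n)_p → ∞ as n → ∞; that is, (x_n) converges to the same Gromov boundary point as (w_n), so the closure of the horoball { h < log R } meets the Gromov boundary only in that point. -/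
/-! Since `h(x) < log R`, for `m` large we have `d(x,w_m) - d(w_m,p) < log R`, i.e.
`(x|w_m)_p > (d(x,p) - log R)/2`. Together with `(w_m|w_n)_p → ∞`, hyperbolicity applied to
`x_n, w_n` through `w_m` bounds `(x_n|w_n)_p` from below by a quantity tending to infinity. -/

open Filter Metric Topology

lemma sub_div_two_lt_gromovProduct {X : Type*} [MetricSpace X] {p x w : X} {c : ℝ}
    (h : dist x w - dist w p < c) : (dist x p - c) / 2 < gromovProduct p x w := by
  unfold gromovProduct
  linarith

lemma tendsto_gromovProduct_of_eventually_le {X : Type*} [MetricSpace X] {δ : ℝ}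
    (hhyp : IsDeltaHyperbolic X δ) {p : X} {w : ℕ → X}
    (hGromov : ∀ C > (0 : ℝ), ∃ N : ℕ, ∀ n ≥ N, ∀ m ≥ N, C ≤ gromovProduct p (w n) (w m))
    {x : ℕ → X} {a : ℕ → ℝ} (ha : Tendsto a atTop atTop)
    (hxw : ∀ n, ∀ᶠ m in atTop, a n ≤ gromovProduct p (x n) (w m)) :
    Tendsto (fun n => gromovProduct p (x n) (w n)) atTop atTop := by
  refine tendsto_atTop.2 fun b => ?_
  set C := max (b + δ) 1
  obtain ⟨N, hN⟩ := hGromov C (lt_of_lt_of_le one_pos (le_max_right _ _))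
  filter_upwards [ha.eventually_ge_atTop C, eventually_ge_atTop N] with n han hn
  obtain ⟨m, hxm, hm⟩ := ((hxw n).and (eventually_ge_atTop N)).exists
  have hwm : C ≤ gromovProduct p (w m) (w n) := hN m hm n hn
  have hmin : C ≤ min (gromovProduct p (x n) (w m)) (gromovProduct p (w m) (w n)) :=
    le_min (han.trans hxm) hwm
  linarith [hhyp p (x n) (w n) (w m), le_max_left (b + δ) 1]

theorem horoball_closure_meets_boundary_in_one_point_general {X : Type*} [MetricSpace X]
    (δ : ℝ) (hhyp : IsDeltaHyperbolic X δ)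
    (p : X) (R : ℝ)
    (w : ℕ → X)
    (hGromov : ∀ C > (0 : ℝ), ∃ N : ℕ, ∀ n ≥ N, ∀ m ≥ N, C ≤ gromovProduct p (w n) (w m))
    (h : X → ℝ)
    (hconv : ∀ x : X, Tendsto (fun n => dist x (w n) - dist (w n) p) atTop (nhds (h x)))
    (x : ℕ → X) (hx : ∀ n : ℕ, h (x n) < Real.log R)
    (hxdiv : Tendsto (fun n => dist (x n) p) atTop atTop) :
    Tendsto (fun n => gromovProduct p (x n) (w n)) atTop atTop := by
  have ha : Tendsto (fun n => (dist (x n) p - Real.log R) / 2) atTop atTop :=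
    (tendsto_atTop_add_const_right _ _ hxdiv).atTop_div_const two_pos
  refine tendsto_gromovProduct_of_eventually_le hhyp hGromov ha fun n => ?_
  filter_upwards [(hconv (x n)).eventually_lt_const (hx n)] with m hm
  exact (sub_div_two_lt_gromovProduct hm).le

/-- in a proper geodesic δ-hyperbolic space, if (w_n) goes to
infinity in the Gromov sense and defines a horofunction h, then every sequence
(x_n) in a horoball of h with d(x_n,p) → ∞ satisfies (x_n|w_n)_p → ∞, i.e. it
converges to the same Gromov boundary point as (w_n). -/
theorem horoball_closure_meets_boundary_in_one_point {X : Type*} [MetricSpace X]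
    [ProperSpace X] (hX : IsGeodesicSpace X)
    (δ : ℝ) (hδ : 0 ≤ δ) (hhyp : IsDeltaHyperbolic X δ)
    (p : X) (R : ℝ) (hR : 0 < R)
    (w : ℕ → X)
    (hGromov : ∀ C > (0 : ℝ), ∃ N : ℕ, ∀ n ≥ N, ∀ m ≥ N, C ≤ gromovProduct p (w n) (w m))
    (h : X → ℝ)
    (hconv : ∀ x : X, Tendsto (fun n => dist x (w n) - dist (w n) p) atTop (nhds (h x)))
    (x : ℕ → X) (hx : ∀ n : ℕ, h (x n) < Real.log R)
    (hxdiv : Tendsto (fun n => dist (x n) p) atTop atTop) :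
    Tendsto (fun n => gromovProduct p (x n) (w n)) atTop atTop :=
  horoball_closure_meets_boundary_in_one_point_general δ hhyp p R w hGromov h hconv x hx hxdiv
end
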